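/- Let (N, ∘_λ) be a commutative associative conformal superalgebra and let D be an even derivation of (N, ∘_λ). Define a ∗_λ b := a ∘_λ D(b) for a, b ∈ N. Then (N, ∗_λ) is a Novikov conformal superalgebra and (N, ∘_λ, ∗_λ) is a Novikov–Poisson conformal superalgebra. -/

import Mathlib

open Polynomial
open scoped TensorProduct

noncomputable section

namespace TPCSAFormal

/-- The super-sign `(-1)^{i·j}` for parities `i, j ∈ ℤ/2ℤ`. -/
def sgn (i j : ZMod 2) : ℂ := (-1 : ℂ) ^ (i.val * j.val)

variable (L : Type*) [AddCommGroup L] [Module ℂ L]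
  [Module (Polynomial ℂ) L] [IsScalarTower ℂ (Polynomial ℂ) L]

/-- A conformal `λ`-product on the `ℂ[∂]`-module `L`, recorded by its family of `n`-th
product coefficients: `a ∘_λ b = ∑_n λ^n • coeff n a b`, with finitely many nonzero terms.
This is exactly the data of a `ℂ`-bilinear map `L ⊗ L → ℂ[λ] ⊗ L`. -/
structure ConformalProduct where
  coeff : ℕ → L →ₗ[ℂ] L →ₗ[ℂ] L
  coeff_finite : ∀ a b : L, ∃ N : ℕ, ∀ n : ℕ, N ≤ n → coeff n a b = 0

variable {L}

/-- The value `a ∘_λ b` of the `λ`-product at `λ ∈ ℂ`.  Since `ℂ` is infinite, identities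
between such values for all `λ` are equivalent to the corresponding polynomial identities. -/
def ConformalProduct.mul (m : ConformalProduct L) (lam : ℂ) (a b : L) : L :=
  ∑ᶠ n : ℕ, lam ^ n • m.coeff n a b

/-- The value `a ∘_{-∂-λ} b`, where `∂` acts on `L` as scalar multiplication by
`X ∈ ℂ[∂]` (the variable `λ` being replaced by the operator `-∂-λ`). -/
def ConformalProduct.cmul (m : ConformalProduct L) (lam : ℂ) (a b : L) : L :=
  ∑ᶠ n : ℕ, ((-((X : Polynomial ℂ) + C lam)) ^ n) • m.coeff n a b

variable (L) in
/-- A `ℤ₂`-grading on `L` making it a `ℤ₂`-graded `ℂ[∂]`-module: `L = L₀ ⊕ L₁` with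
`∂ L_i ⊆ L_i`, where `∂` acts as multiplication by `X ∈ ℂ[∂]`. -/
structure SuperModule where
  grade : ZMod 2 → Submodule ℂ L
  isInternal : DirectSum.IsInternal grade
  X_smul_mem : ∀ (i : ZMod 2) (a : L), a ∈ grade i → (X : Polynomial ℂ) • a ∈ grade i

/-- `m` is an even `λ`-product on the `ℤ₂`-graded `ℂ[∂]`-module `(L, S)`:
it is even with respect to the grading and conformally sesquilinear. -/
structure IsLambdaProduct (S : SuperModule L) (m : ConformalProduct L) : Prop where
  even : ∀ (i j : ZMod 2) (a b : L), a ∈ S.grade i → b ∈ S.grade j →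
    ∀ n : ℕ, m.coeff n a b ∈ S.grade (i + j)
  sesq_left : ∀ (lam : ℂ) (a b : L),
    m.mul lam ((X : Polynomial ℂ) • a) b = (-lam) • m.mul lam a b
  sesq_right : ∀ (lam : ℂ) (a b : L),
    m.mul lam a ((X : Polynomial ℂ) • b) =
      (X : Polynomial ℂ) • m.mul lam a b + lam • m.mul lam a b

/-- `(L, S, m)` is a commutative associative conformal superalgebra. -/
structure IsCommAssoc (S : SuperModule L) (m : ConformalProduct L)
    extends IsLambdaProduct S m : Prop where
  comm : ∀ (i j : ZMod 2) (a b : L), a ∈ S.grade i → b ∈ S.grade j →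
    ∀ lam : ℂ, m.mul lam a b = sgn i j • m.cmul lam b a
  assoc : ∀ (lam mu : ℂ) (a b c : L),
    m.mul lam a (m.mul mu b c) = m.mul (lam + mu) (m.mul lam a b) c

/-- `(L, S, br)` is a Lie conformal superalgebra. -/
structure IsLie (S : SuperModule L) (br : ConformalProduct L)
    extends IsLambdaProduct S br : Prop where
  skew : ∀ (i j : ZMod 2) (a b : L), a ∈ S.grade i → b ∈ S.grade j →
    ∀ lam : ℂ, br.mul lam a b = -(sgn i j • br.cmul lam b a)
  jacobi : ∀ (i j : ZMod 2) (a b : L), a ∈ S.grade i → b ∈ S.grade j →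
    ∀ (c : L) (lam mu : ℂ),
      br.mul lam a (br.mul mu b c) =
        br.mul (lam + mu) (br.mul lam a b) c + sgn i j • br.mul mu b (br.mul lam a c)

/-- `(L, S, m, br)` is a transposed Poisson conformal superalgebra. -/
structure IsTPCSA (S : SuperModule L) (m br : ConformalProduct L) : Prop where
  commAssoc : IsCommAssoc S m
  lie : IsLie S br
  transposedLeibniz : ∀ (i j : ZMod 2) (a b : L), a ∈ S.grade i → b ∈ S.grade j →
    ∀ (c : L) (lam mu : ℂ),
      (2 : ℂ) • m.mul lam a (br.mul mu b c) =
        br.mul (lam + mu) (m.mul lam a b) c + sgn i j • br.mul mu b (m.mul lam a c)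

/-- `(L, S, m, br)` is a Poisson conformal superalgebra. -/
structure IsPCSA (S : SuperModule L) (m br : ConformalProduct L) : Prop where
  commAssoc : IsCommAssoc S m
  lie : IsLie S br
  leibniz : ∀ (i j : ZMod 2) (a b : L), a ∈ S.grade i → b ∈ S.grade j →
    ∀ (c : L) (lam mu : ℂ),
      br.mul lam a (m.mul mu b c) =
        m.mul (lam + mu) (br.mul lam a b) c + sgn i j • m.mul mu b (br.mul lam a c)

/-- `(L, S, br, α)` is a Hom-Lie conformal superalgebra. -/
structure IsHomLie (S : SuperModule L) (br : ConformalProduct L) (α : L → L)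
    extends IsLambdaProduct S br : Prop where
  map_smul_add : ∀ (c : ℂ) (a b : L), α (c • a + b) = c • α a + α b
  map_grade : ∀ (i : ZMod 2) (a : L), a ∈ S.grade i → α a ∈ S.grade i
  commute_partial : ∀ a : L, α ((X : Polynomial ℂ) • a) = (X : Polynomial ℂ) • α a
  skew : ∀ (i j : ZMod 2) (a b : L), a ∈ S.grade i → b ∈ S.grade j →
    ∀ lam : ℂ, br.mul lam a b = -(sgn i j • br.cmul lam b a)
  homJacobi : ∀ (i j : ZMod 2) (a b : L), a ∈ S.grade i → b ∈ S.grade j →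
    ∀ (c : L) (lam mu : ℂ),
      br.mul lam (α a) (br.mul mu b c) =
        br.mul (lam + mu) (br.mul lam a b) (α c) + sgn i j • br.mul mu (α b) (br.mul lam a c)

/-- `(L, S, p)` is a left-symmetric conformal superalgebra. -/
structure IsLeftSymmetric (S : SuperModule L) (p : ConformalProduct L)
    extends IsLambdaProduct S p : Prop where
  leftSym : ∀ (i j : ZMod 2) (a b : L), a ∈ S.grade i → b ∈ S.grade j →
    ∀ (c : L) (lam mu : ℂ),
      p.mul (lam + mu) (p.mul lam a b) c - p.mul lam a (p.mul mu b c) =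
        sgn i j • (p.mul (lam + mu) (p.mul mu b a) c - p.mul mu b (p.mul lam a c))

/-- `(L, S, p)` is a (left) Novikov conformal superalgebra. -/
structure IsNovikov (S : SuperModule L) (p : ConformalProduct L)
    extends IsLeftSymmetric S p : Prop where
  novikov : ∀ (j k : ZMod 2) (b c : L), b ∈ S.grade j → c ∈ S.grade k →
    ∀ (a : L) (lam mu : ℂ),
      p.mul (lam + mu) (p.mul lam a b) c = sgn j k • p.cmul mu (p.mul lam a c) b

/-- `(L, S, mc, p)` is a Novikov-Poisson conformal superalgebra. -/
structure IsNovikovPoisson (S : SuperModule L) (mc p : ConformalProduct L) : Prop where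
  commAssoc : IsCommAssoc S mc
  novikov : IsNovikov S p
  compat₁ : ∀ (lam mu : ℂ) (a b c : L),
    p.mul (lam + mu) (mc.mul lam a b) c = mc.mul lam a (p.mul mu b c)
  compat₂ : ∀ (i j : ZMod 2) (a b : L), a ∈ S.grade i → b ∈ S.grade j →
    ∀ (c : L) (lam mu : ℂ),
      mc.mul (lam + mu) (p.mul lam a b) c - p.mul lam a (mc.mul mu b c) =
        sgn i j • (mc.mul (lam + mu) (p.mul mu b a) c - p.mul mu b (mc.mul lam a c))

/-- `(L, S, mc, p)` is a pre-Lie commutative conformal superalgebra. -/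
structure IsPreLieComm (S : SuperModule L) (mc p : ConformalProduct L) : Prop where
  commAssoc : IsCommAssoc S mc
  leftSymmetric : IsLeftSymmetric S p
  compat : ∀ (i j : ZMod 2) (a b : L), a ∈ S.grade i → b ∈ S.grade j →
    ∀ (c : L) (lam mu : ℂ),
      p.mul lam a (mc.mul mu b c) =
        mc.mul (lam + mu) (p.mul lam a b) c + sgn i j • mc.mul mu b (p.mul lam a c)

/-- `(L, S, mc, p)` is a pre-Lie Poisson conformal superalgebra. -/
structure IsPreLiePoisson (S : SuperModule L) (mc p : ConformalProduct L) : Prop where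
  commAssoc : IsCommAssoc S mc
  leftSymmetric : IsLeftSymmetric S p
  compat₁ : ∀ (lam mu : ℂ) (a b c : L),
    p.mul (lam + mu) (mc.mul lam a b) c = mc.mul lam a (p.mul mu b c)
  compat₂ : ∀ (i j : ZMod 2) (a b : L), a ∈ S.grade i → b ∈ S.grade j →
    ∀ (c : L) (lam mu : ℂ),
      mc.mul (lam + mu) (p.mul lam a b) c - p.mul lam a (mc.mul mu b c) =
        sgn i j • (mc.mul (lam + mu) (p.mul mu b a) c - p.mul mu b (mc.mul lam a c))


end TPCSAFormal

/-!
Write `a ∗_λ b = a ∘_λ D b`. Expanding `D (b ∘_μ c)` by the Leibniz rule, associativity of `∘_λ`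
gives `(a ∗_λ b) ∘_{λ+μ} c - a ∗_λ (b ∘_μ c) = -a ∘_λ (b ∘_μ D c)`, so the second compatibility
identity, and with `D c` in place of `c` the left symmetry of `∗_λ`, reduce to the
super-commutativity `a ∘_λ (b ∘_μ c) = ± b ∘_μ (a ∘_λ c)` of left multiplications. The Novikov
identity only needs `D` to be even: for homogeneous `a` both of its sides equal
`± D b ∘_μ (a ∘_λ D c)`, and both sides are linear in `a`.
-/

namespace TPCSAFormal

lemma sgn_comm (i j : ZMod 2) : sgn i j = sgn j i := by
  rw [sgn, sgn, Nat.mul_comm]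

lemma sgn_add_right (i j k : ZMod 2) : sgn i (j + k) = sgn i j * sgn i k := by
  rw [sgn, sgn, sgn, ← pow_add, ← mul_add, neg_one_pow_eq_pow_mod_two, eq_comm,
    neg_one_pow_eq_pow_mod_two, ZMod.val_add]
  simp [Nat.mul_mod, Nat.add_mod]

lemma sgn_mul_self (i j : ZMod 2) : sgn i j * sgn i j = 1 := by
  rw [sgn, ← pow_add, ← two_mul, pow_mul]
  norm_num

variable {L : Type*} [AddCommGroup L] [Module ℂ L]

namespace ConformalProduct

variable (m : ConformalProduct L) {R : Type*} [Semiring R] [Module R L]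

lemma support_smul_coeff_finite (g : ℕ → R) (a b : L) :
    (Function.support fun n => g n • m.coeff n a b).Finite := by
  obtain ⟨N, hN⟩ := m.coeff_finite a b
  exact (Set.finite_Iio N).subset fun n hn =>
    Set.mem_Iio.2 <| lt_of_not_ge fun h => hn (by simp [hN n h])

lemma finsum_smul_coeff_eq_sum {a b : L} {N : ℕ} (hN : ∀ n, N ≤ n → m.coeff n a b = 0)
    (g : ℕ → R) :
    ∑ᶠ n, g n • m.coeff n a b = ∑ n ∈ Finset.range N, g n • m.coeff n a b :=
  finsum_eq_sum_of_support_subset _ fun n hn =>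
    Finset.mem_coe.2 <| Finset.mem_range.2 <| lt_of_not_ge fun h => hn (by simp [hN n h])

def evalₗ [SMulCommClass R ℂ L] (g : ℕ → R) : L →ₗ[ℂ] L →ₗ[ℂ] L :=
  LinearMap.mk₂ ℂ (fun a b => ∑ᶠ n, g n • m.coeff n a b)
    (fun a a' b => by
      rw [← finsum_add_distrib (m.support_smul_coeff_finite g a b)
        (m.support_smul_coeff_finite g a' b)]
      simp only [map_add, LinearMap.add_apply, smul_add])
    (fun c a b => by simp only [map_smul, LinearMap.smul_apply, smul_comm (g _) c, smul_finsum])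
    (fun a b b' => by
      rw [← finsum_add_distrib (m.support_smul_coeff_finite g a b)
        (m.support_smul_coeff_finite g a b')]
      simp only [map_add, smul_add])
    (fun c a b => by simp only [map_smul, smul_comm (g _) c, smul_finsum])

def mulₗ (lam : ℂ) : L →ₗ[ℂ] L →ₗ[ℂ] L := m.evalₗ (lam ^ ·)

variable {m}

@[simp] lemma mulₗ_apply (lam : ℂ) (a b : L) : m.mulₗ lam a b = m.mul lam a b := rfl

lemma mul_eq_sum {a b : L} {N : ℕ} (hN : ∀ n, N ≤ n → m.coeff n a b = 0) (lam : ℂ) :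
    m.mul lam a b = ∑ n ∈ Finset.range N, lam ^ n • m.coeff n a b :=
  m.finsum_smul_coeff_eq_sum hN _

lemma mul_add (lam : ℂ) (a b b' : L) : m.mul lam a (b + b') = m.mul lam a b + m.mul lam a b' :=
  (m.mulₗ lam a).map_add b b'

lemma add_mul (lam : ℂ) (a a' b : L) : m.mul lam (a + a') b = m.mul lam a b + m.mul lam a' b :=
  (m.mulₗ lam).map_add₂ a a' b

lemma smul_mul (lam c : ℂ) (a b : L) : m.mul lam (c • a) b = c • m.mul lam a b :=
  (m.mulₗ lam).map_smul₂ c a b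

end ConformalProduct

variable [Module ℂ[X] L]

lemma ConformalProduct.cmul_eq_sum {m : ConformalProduct L} {a b : L} {N : ℕ}
    (hN : ∀ n, N ≤ n → m.coeff n a b = 0) (lam : ℂ) :
    m.cmul lam a b = ∑ n ∈ Finset.range N, (-((X : ℂ[X]) + C lam)) ^ n • m.coeff n a b :=
  m.finsum_smul_coeff_eq_sum hN _

lemma IsLambdaProduct.mul_mem {S : SuperModule L} {m : ConformalProduct L}
    (hm : IsLambdaProduct S m) {i j : ZMod 2} {a b : L}
    (ha : a ∈ S.grade i) (hb : b ∈ S.grade j) (lam : ℂ) :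
    m.mul lam a b ∈ S.grade (i + j) := by
  obtain ⟨N, hN⟩ := m.coeff_finite a b
  rw [ConformalProduct.mul_eq_sum hN]
  exact Submodule.sum_mem _ fun n _ => Submodule.smul_mem _ _ (hm.even i j a b ha hb n)

lemma IsCommAssoc.cmul_eq_sgn_smul_mul {S : SuperModule L} {m : ConformalProduct L}
    (hm : IsCommAssoc S m) {i j : ZMod 2} {a b : L} (ha : a ∈ S.grade i) (hb : b ∈ S.grade j)
    (lam : ℂ) : m.cmul lam b a = sgn i j • m.mul lam a b := by
  rw [hm.comm i j a b ha hb, smul_smul, sgn_mul_self, one_smul]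

lemma SuperModule.linearMap_ext (S : SuperModule L) {M : Type*} [AddCommGroup M] [Module ℂ M]
    {f g : L →ₗ[ℂ] M} (h : ∀ i, ∀ a ∈ S.grade i, f a = g a) : f = g := by
  have hle : ⨆ i, S.grade i ≤ LinearMap.eqLocus f g := iSup_le fun i a ha => h i a ha
  rw [S.isInternal.submodule_iSup_eq_top] at hle
  exact LinearMap.ext fun a => hle Submodule.mem_top

variable [IsScalarTower ℂ ℂ[X] L]

namespace ConformalProduct

variable (m : ConformalProduct L)

def cmulₗ (lam : ℂ) : L →ₗ[ℂ] L →ₗ[ℂ] L := m.evalₗ ((-((X : ℂ[X]) + C lam)) ^ ·)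

variable {m}

@[simp] lemma cmulₗ_apply (lam : ℂ) (a b : L) : m.cmulₗ lam a b = m.cmul lam a b := rfl

section Sesquilinear

variable (hs : ∀ (lam : ℂ) (a b : L), m.mul lam ((X : ℂ[X]) • a) b = (-lam) • m.mul lam a b)
include hs

lemma mul_polynomial_smul (p : ℂ[X]) (lam : ℂ) (a b : L) :
    m.mul lam (p • a) b = p.eval (-lam) • m.mul lam a b := by
  induction p using Polynomial.induction_on with
  | C r => rw [eval_C, ← smul_mul, ← algebraMap_smul ℂ[X] r a, Polynomial.algebraMap_eq]
  | add p q hp hq => rw [add_smul, add_mul, hp, hq, eval_add, add_smul]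
  | monomial n r h =>
    have hX : (C r * X ^ (n + 1)) • a = (X : ℂ[X]) • (C r * X ^ n) • a := by
      rw [← mul_smul]; ring_nf
    rw [hX, hs, h, smul_smul]
    congr 1
    simp only [eval_mul, eval_C, eval_pow, eval_X]
    ring

/-- Evaluating `∂ ↦ -(λ + μ)` turns the operator `-∂-λ` into `μ`. -/
lemma mul_cmul (lam mu : ℂ) (a b c : L) :
    m.mul (lam + mu) (m.cmul lam a b) c = m.mul (lam + mu) (m.mul mu a b) c := by
  obtain ⟨N, hN⟩ := m.coeff_finite a b
  simp only [cmul_eq_sum hN, mul_eq_sum hN, ← mulₗ_apply, map_sum, LinearMap.sum_apply]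
  refine Finset.sum_congr rfl fun n _ => ?_
  simp only [mulₗ_apply, mul_polynomial_smul hs, smul_mul]
  congr 1
  simp only [eval_pow, eval_neg, eval_add, eval_X, eval_C]
  ring

end Sesquilinear

end ConformalProduct

namespace IsCommAssoc

variable {S : SuperModule L} {m : ConformalProduct L} (hm : IsCommAssoc S m)
include hm

lemma mul_left_comm {i j : ZMod 2} {a b : L} (ha : a ∈ S.grade i) (hb : b ∈ S.grade j)
    (c : L) (lam mu : ℂ) :
    m.mul lam a (m.mul mu b c) = sgn i j • m.mul mu b (m.mul lam a c) := by
  rw [hm.assoc, hm.comm i j a b ha hb, m.smul_mul, m.mul_cmul hm.sesq_left, add_comm lam mu,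
    ← hm.assoc]

end IsCommAssoc

namespace ConformalProduct

def compRight (m : ConformalProduct L) (D : L →ₗ[ℂ[X]] L) : ConformalProduct L where
  coeff n := (m.coeff n).compl₂ (D.restrictScalars ℂ)
  coeff_finite a b := m.coeff_finite a (D b)

@[simp] lemma compRight_mul (m : ConformalProduct L) (D : L →ₗ[ℂ[X]] L) (lam : ℂ) (a b : L) :
    (m.compRight D).mul lam a b = m.mul lam a (D b) := rfl

@[simp] lemma compRight_cmul (m : ConformalProduct L) (D : L →ₗ[ℂ[X]] L) (lam : ℂ) (a b : L) :
    (m.compRight D).cmul lam a b = m.cmul lam a (D b) := rfl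

end ConformalProduct

section Derivation

variable {S : SuperModule L} {m : ConformalProduct L} {D : L →ₗ[ℂ[X]] L}

lemma isLambdaProduct_compRight (hm : IsLambdaProduct S m)
    (hD_grade : ∀ (i : ZMod 2) (a : L), a ∈ S.grade i → D a ∈ S.grade i) :
    IsLambdaProduct S (m.compRight D) where
  even i j a b ha hb n := hm.even i j a (D b) ha (hD_grade j b hb) n
  sesq_left lam a b := hm.sesq_left lam a (D b)
  sesq_right lam a b := by
    simpa only [ConformalProduct.compRight_mul, map_smul] using hm.sesq_right lam a (D b)

lemma mul_compRight_sub_compRight_mul (hm : IsCommAssoc S m)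
    (hD_der : ∀ (lam : ℂ) (a b : L),
      D (m.mul lam a b) = m.mul lam (D a) b + m.mul lam a (D b))
    (lam mu : ℂ) (a b c : L) :
    m.mul (lam + mu) ((m.compRight D).mul lam a b) c - (m.compRight D).mul lam a (m.mul mu b c) =
      -m.mul lam a (m.mul mu b (D c)) := by
  rw [ConformalProduct.compRight_mul, ConformalProduct.compRight_mul, hD_der, m.mul_add,
    ← hm.assoc]
  abel

lemma compRight_compat₂ (hm : IsCommAssoc S m)
    (hD_der : ∀ (lam : ℂ) (a b : L),
      D (m.mul lam a b) = m.mul lam (D a) b + m.mul lam a (D b))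
    {i j : ZMod 2} {a b : L} (ha : a ∈ S.grade i) (hb : b ∈ S.grade j) (c : L) (lam mu : ℂ) :
    m.mul (lam + mu) ((m.compRight D).mul lam a b) c - (m.compRight D).mul lam a (m.mul mu b c) =
      sgn i j • (m.mul (lam + mu) ((m.compRight D).mul mu b a) c -
        (m.compRight D).mul mu b (m.mul lam a c)) := by
  rw [mul_compRight_sub_compRight_mul hm hD_der, add_comm lam mu,
    mul_compRight_sub_compRight_mul hm hD_der, hm.mul_left_comm ha hb, smul_neg]

lemma isLeftSymmetric_compRight (hm : IsCommAssoc S m)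
    (hD_grade : ∀ (i : ZMod 2) (a : L), a ∈ S.grade i → D a ∈ S.grade i)
    (hD_der : ∀ (lam : ℂ) (a b : L),
      D (m.mul lam a b) = m.mul lam (D a) b + m.mul lam a (D b)) :
    IsLeftSymmetric S (m.compRight D) where
  toIsLambdaProduct := isLambdaProduct_compRight hm.toIsLambdaProduct hD_grade
  leftSym _ _ _ _ ha hb c lam mu := compRight_compat₂ hm hD_der ha hb (D c) lam mu

lemma compRight_novikov (hm : IsCommAssoc S m)
    (hD_grade : ∀ (i : ZMod 2) (a : L), a ∈ S.grade i → D a ∈ S.grade i)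
    {j k : ZMod 2} {b c : L} (hb : b ∈ S.grade j) (hc : c ∈ S.grade k) (a : L) (lam mu : ℂ) :
    (m.compRight D).mul (lam + mu) ((m.compRight D).mul lam a b) c =
      sgn j k • (m.compRight D).cmul mu ((m.compRight D).mul lam a c) b := by
  set p := m.compRight D
  have homogeneous : ∀ i, ∀ a ∈ S.grade i,
      p.mul (lam + mu) (p.mul lam a b) c = sgn j k • p.cmul mu (p.mul lam a c) b := by
    intro i a ha
    have hDb := hD_grade j b hb
    have hac := hm.mul_mem ha (hD_grade k c hc) lam
    simp only [p, ConformalProduct.compRight_mul, ConformalProduct.compRight_cmul]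
    rw [← hm.assoc, hm.mul_left_comm ha hDb, hm.cmul_eq_sgn_smul_mul hDb hac, smul_smul,
      sgn_add_right, mul_left_comm, sgn_mul_self, mul_one, sgn_comm]
  exact LinearMap.congr_fun (S.linearMap_ext
    (f := (p.mulₗ (lam + mu)).flip c ∘ₗ (p.mulₗ lam).flip b)
    (g := sgn j k • (p.cmulₗ mu).flip b ∘ₗ (p.mulₗ lam).flip c) homogeneous) a

lemma isNovikovPoisson_compRight (hm : IsCommAssoc S m)
    (hD_grade : ∀ (i : ZMod 2) (a : L), a ∈ S.grade i → D a ∈ S.grade i)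
    (hD_der : ∀ (lam : ℂ) (a b : L),
      D (m.mul lam a b) = m.mul lam (D a) b + m.mul lam a (D b)) :
    IsNovikovPoisson S m (m.compRight D) where
  commAssoc := hm
  novikov :=
    { toIsLeftSymmetric := isLeftSymmetric_compRight hm hD_grade hD_der
      novikov _ _ _ _ hb hc := compRight_novikov hm hD_grade hb hc }
  compat₁ lam mu a b c := (hm.assoc lam mu a b (D c)).symm
  compat₂ _ _ _ _ ha hb := compRight_compat₂ hm hD_der ha hb

end Derivation

/-- if `D` is an even derivation of a commutative associative conformal
superalgebra `(N, ∘_λ)`, then `a ∗_λ b := a ∘_λ D(b)` makes `N` a Novikov conformal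
superalgebra and `(N, ∘_λ, ∗_λ)` a Novikov-Poisson conformal superalgebra. -/
theorem statement_12 (S : SuperModule L) (m : ConformalProduct L)
    (hm : IsCommAssoc S m) (D : L →ₗ[Polynomial ℂ] L)
    (hD_grade : ∀ (i : ZMod 2) (a : L), a ∈ S.grade i → D a ∈ S.grade i)
    (hD_der : ∀ (lam : ℂ) (a b : L),
      D (m.mul lam a b) = m.mul lam (D a) b + m.mul lam a (D b)) :
    ∃ p : ConformalProduct L,
      (∀ (lam : ℂ) (a b : L), p.mul lam a b = m.mul lam a (D b)) ∧
      IsNovikov S p ∧ IsNovikovPoisson S m p :=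
  have hNP := isNovikovPoisson_compRight hm hD_grade hD_der
  ⟨m.compRight D, m.compRight_mul D, hNP.novikov, hNP⟩

end TPCSAFormal
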